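/- For $z, w \in \mathbb{C}^4$ with $|z_i| = |w_i|$ for all $i$ and $|\phi_z| = |\phi_w| \pmod{2\pi}$, where $\phi_z = (\arg z_1 + \arg z_4) - (\arg z_2 + \arg z_3)$, we have $\|z\|_{\mathsf{X}} = \|w\|_{\mathsf{X}}$. -/

import Mathlib

open Complex Real

noncomputable def Xfun (z : Fin 4 → ℂ) (σ : ℝ) : ℝ :=
  ‖z 0 * Complex.exp (σ * Complex.I) + (starRingEnd ℂ) (z 3)‖ +
  ‖z 1 * Complex.exp (σ * Complex.I) + (starRingEnd ℂ) (z 2)‖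

noncomputable def Xnorm (z : Fin 4 → ℂ) : ℝ := ⨆ σ : ℝ, Xfun z σ

noncomputable def phase (z : Fin 4 → ℂ) : ℝ :=
  (Complex.arg (z 0) + Complex.arg (z 3)) - (Complex.arg (z 1) + Complex.arg (z 2))

/-! By the law of cosines,
`‖a e^{iσ} + conj b‖ = √(‖a‖² + ‖b‖² + 2‖a‖‖b‖ cos (arg a + arg b + σ))`.
After the shift `σ ↦ arg (z 1) + arg (z 2) + σ`, the function whose supremum is `Xnorm z`
therefore depends on `z` only through the moduli `‖z i‖` and `cos (phase z + σ)`, i.e. on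
`phase z` as an angle. Substituting `σ ↦ -σ` shows that the supremum is moreover unchanged
under `φ ↦ -φ`. -/

open ComplexConjugate

lemma mul_exp_mul_eq_norm_mul_exp_arg (a b : ℂ) (σ : ℝ) :
    a * exp (σ * I) * b = (‖a‖ * ‖b‖ : ℝ) * exp ((arg a + arg b + σ : ℝ) * I) := by
  conv_lhs => rw [← norm_mul_exp_arg_mul_I a, ← norm_mul_exp_arg_mul_I b]
  push_cast
  rw [add_mul, add_mul, Complex.exp_add, Complex.exp_add]
  ring

lemma norm_mul_exp_add_conj_sq (a b : ℂ) (σ : ℝ) :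
    ‖a * exp (σ * I) + conj b‖ ^ 2 =
      ‖a‖ ^ 2 + ‖b‖ ^ 2 + 2 * ‖a‖ * ‖b‖ * Real.cos (arg a + arg b + σ) := by
  rw [Complex.sq_norm, normSq_add, conj_conj, mul_exp_mul_eq_norm_mul_exp_arg, re_ofReal_mul,
    exp_ofReal_mul_I_re, normSq_conj, ← Complex.sq_norm, ← Complex.sq_norm, norm_mul,
    norm_exp_ofReal_mul_I]
  ring

noncomputable def sideLength (r s : ℝ) (θ : Real.Angle) : ℝ :=
  √(r ^ 2 + s ^ 2 + 2 * r * s * θ.cos)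

lemma sideLength_neg (r s : ℝ) (θ : Real.Angle) : sideLength r s (-θ) = sideLength r s θ := by
  rw [sideLength, sideLength, Real.Angle.cos_neg]

lemma norm_mul_exp_add_conj (a b : ℂ) (σ : ℝ) :
    ‖a * exp (σ * I) + conj b‖ = sideLength ‖a‖ ‖b‖ (arg a + arg b + σ : ℝ) := by
  rw [sideLength, Real.Angle.cos_coe, ← norm_mul_exp_add_conj_sq, sqrt_sq (norm_nonneg _)]

noncomputable def phaseProfile (r : Fin 4 → ℝ) (φ : Real.Angle) (σ : ℝ) : ℝ :=
  sideLength (r 0) (r 3) (φ + σ) + sideLength (r 1) (r 2) σ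

noncomputable def phaseNorm (r : Fin 4 → ℝ) (φ : Real.Angle) : ℝ :=
  ⨆ σ : ℝ, phaseProfile r φ σ

lemma Xfun_eq_phaseProfile (z : Fin 4 → ℂ) (σ : ℝ) :
    Xfun z σ = phaseProfile (‖z ·‖) (phase z) (arg (z 1) + arg (z 2) + σ) := by
  rw [Xfun, phaseProfile, norm_mul_exp_add_conj, norm_mul_exp_add_conj, ← Real.Angle.coe_add,
    phase]
  congr 3
  ring

lemma Xnorm_eq_phaseNorm (z : Fin 4 → ℂ) : Xnorm z = phaseNorm (‖z ·‖) (phase z) := by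
  simp only [Xnorm, Xfun_eq_phaseProfile]
  exact (Equiv.addLeft _).iSup_comp (g := phaseProfile _ _)

lemma phaseProfile_neg (r : Fin 4 → ℝ) (φ : Real.Angle) (σ : ℝ) :
    phaseProfile r (-φ) σ = phaseProfile r φ (-σ) := by
  rw [phaseProfile, phaseProfile, ← sideLength_neg _ _ (φ + _), neg_add, Real.Angle.coe_neg,
    neg_neg, sideLength_neg (r 1)]

lemma phaseNorm_neg (r : Fin 4 → ℝ) (φ : Real.Angle) : phaseNorm r (-φ) = phaseNorm r φ := by
  simp only [phaseNorm, phaseProfile_neg]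
  exact (Equiv.neg ℝ).iSup_comp (g := phaseProfile r φ)

theorem stmt_4 (z w : Fin 4 → ℂ) (hmag : ∀ i, ‖z i‖ = ‖w i‖)
    (hphase : ((phase z : Real.Angle) = (phase w : Real.Angle)) ∨
      ((phase z : Real.Angle) = -(phase w : Real.Angle))) :
    Xnorm z = Xnorm w := by
  simp only [Xnorm_eq_phaseNorm, hmag]
  rcases hphase with h | h
  · rw [h]
  · rw [h, phaseNorm_neg]
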